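/- Let B be a K-algebra generated by G, C a K-algebra, and for each b ∈ G let δ_b ⊆ C be a finite linearly independent subset. Let A be the free (tensor) algebra on symbols {x_{b,c} : b ∈ G, c ∈ δ_b} modulo the smallest ideal making the assignment b ↦ Σ_{c ∈ δ_b} c ⊗ x_{b,c} extend to a well-defined algebra morphism h : B → C ⊗ A (i.e., the ideal generated by the coefficients, with respect to a basis of C extending each δ_b, of all relations of B evaluated at these images). Then h is a well-defined algebra morphism and the pair (A, h) satisfies the universal property of Lemma 5-121553: every pair (A', h') with h'(b) ∈ span{c ⊗ a' : c ∈ δ_b} for all b ∈ G factors uniquely through (A, h). -/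

import Mathlib

open TensorProduct

section

variable (K : Type) [Field K] {B C : Type} [Ring B] [Algebra K B]
  [Ring C] [Algebra K C]

/-- The set of generating symbols `x_{b,c}` for `b ∈ G`, `c ∈ δ_b`. -/
def SymGen (G : Set B) (δ : G → Finset C) : Type :=
  (b : G) × {c : C // c ∈ δ b}

/-- The presentation morphism `π : F(G) → B` of `B` by the free algebra
on its generating set `G`. -/
noncomputable def present (G : Set B) : FreeAlgebra K G →ₐ[K] B :=
  FreeAlgebra.lift K (fun b : G => (b : B))

/-- The morphism `F(G) → C ⊗ F(X)` sending `b ↦ Σ_{c ∈ δ_b} c ⊗ x_{b,c}`. -/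
noncomputable def symSubst (G : Set B) (δ : G → Finset C) :
    FreeAlgebra K G →ₐ[K] C ⊗[K] FreeAlgebra K (SymGen G δ) :=
  FreeAlgebra.lift K (fun b : G =>
    ∑ c ∈ (δ b).attach,
      (c : C) ⊗ₜ[K] FreeAlgebra.ι K (⟨b, c⟩ : SymGen G δ))

/-- Extraction of the `i`-th coefficient with respect to a basis `v` of `C`. -/
noncomputable def coeffAt {ι : Type} (v : Module.Basis ι K C) (i : ι)
    (M : Type) [Ring M] [Algebra K M] : C ⊗[K] M →ₗ[K] M :=
  (TensorProduct.lid K M).toLinearMap ∘ₗ LinearMap.rTensor M (v.coord i)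

/-- The relation on `F(X)` whose induced congruence divides out exactly the
coefficients (w.r.t. the basis `v`) of the images of all relations of `B`. -/
def coeffRel (G : Set B) (δ : G → Finset C) {ι : Type} (v : Module.Basis ι K C)
    (x y : FreeAlgebra K (SymGen G δ)) : Prop :=
  y = 0 ∧ ∃ r : FreeAlgebra K G, present K G r = 0 ∧
    ∃ i : ι, x = coeffAt K v i (FreeAlgebra K (SymGen G δ)) (symSubst K G δ r)

section Aux

variable {ι : Type} (v : Module.Basis ι K C)

lemma coeffAt_tmul (i : ι) (M : Type) [Ring M] [Algebra K M] (c : C) (m : M) :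
    coeffAt K v i M (c ⊗ₜ[K] m) = v.coord i c • m := by
  simp [coeffAt]

lemma coeffAt_eq_zero (M : Type) [Ring M] [Algebra K M] (t : C ⊗[K] M)
    (h : ∀ i, coeffAt K v i M t = 0) : t = 0 := by
  classical
  let E : C ⊗[K] M ≃ₗ[K] (ι →₀ M) :=
    (TensorProduct.congr v.repr (LinearEquiv.refl K M)).trans
      (TensorProduct.finsuppScalarLeft K M ι)
  have hE : ∀ (t : C ⊗[K] M) (i : ι), E t i = coeffAt K v i M t := by
    intro t i
    induction t using TensorProduct.induction_on with
    | zero => simp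
    | tmul c m =>
        simp [E, TensorProduct.finsuppScalarLeft_apply_tmul_apply, coeffAt_tmul,
          Module.Basis.coord_apply]
    | add x y hx hy => simp [map_add, hx, hy]
  have hzero : E t = 0 := by
    ext i; rw [hE, h i]; rfl
  simpa using E.map_eq_zero_iff.mp hzero

lemma coeffAt_map (M N : Type) [Ring M] [Algebra K M] [Ring N] [Algebra K N]
    (g : M →ₐ[K] N) (i : ι) (t : C ⊗[K] M) :
    coeffAt K v i N (Algebra.TensorProduct.map (AlgHom.id K C) g t)
      = g (coeffAt K v i M t) := by
  induction t using TensorProduct.induction_on with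
  | zero => simp
  | tmul c m =>
      rw [Algebra.TensorProduct.map_tmul, coeffAt_tmul, coeffAt_tmul]
      simp [map_smul]
  | add x y hx hy => simp [map_add, hx, hy]

lemma coeffAt_sum_tmul (s : Finset C) (idx : {c : C // c ∈ s} → ι)
    (hidx : ∀ c, v (idx c) = (c : C)) (M : Type) [Ring M] [Algebra K M]
    (m : {c : C // c ∈ s} → M) (c₀ : {c : C // c ∈ s}) :
    coeffAt K v (idx c₀) M (∑ c ∈ s.attach, (c : C) ⊗ₜ[K] m c) = m c₀ := by
  have hinj : Function.Injective idx := fun a b hab => by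
    apply Subtype.ext; rw [← hidx a, ← hidx b, hab]
  rw [map_sum, Finset.sum_eq_single c₀]
  · rw [coeffAt_tmul, ← hidx c₀, Module.Basis.coord_apply, Module.Basis.repr_self,
      Finsupp.single_eq_same, one_smul]
  · intro c _ hc
    rw [coeffAt_tmul, ← hidx c, Module.Basis.coord_apply, Module.Basis.repr_self,
      Finsupp.single_eq_of_ne (fun hh => hc (hinj hh).symm), zero_smul]
  · intro hc; exact absurd (Finset.mem_attach _ _) hc

lemma span_exists_repr (s : Finset C) (M : Type) [Ring M] [Algebra K M]
    (t : C ⊗[K] M)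
    (ht : t ∈ Submodule.span K {x : C ⊗[K] M | ∃ c ∈ s, ∃ a : M, x = c ⊗ₜ[K] a}) :
    ∃ m : {c : C // c ∈ s} → M, t = ∑ c ∈ s.attach, (c : C) ⊗ₜ[K] m c := by
  classical
  induction ht using Submodule.span_induction with
  | mem x hx =>
      obtain ⟨c₀, hc₀, a, rfl⟩ := hx
      refine ⟨fun c => if c = ⟨c₀, hc₀⟩ then a else 0, ?_⟩
      rw [Finset.sum_eq_single (⟨c₀, hc₀⟩ : {c : C // c ∈ s})]
      · simp
      · intro c _ hc; simp [hc]
      · intro hc; exact absurd (Finset.mem_attach _ _) hc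
  | zero => exact ⟨0, by simp⟩
  | add x y _ _ hx hy =>
      obtain ⟨m₁, rfl⟩ := hx; obtain ⟨m₂, rfl⟩ := hy
      exact ⟨m₁ + m₂, by
        rw [← Finset.sum_add_distrib]
        simp [TensorProduct.tmul_add]⟩
  | smul k x _ hx =>
      obtain ⟨m, rfl⟩ := hx
      exact ⟨k • m, by
        rw [Finset.smul_sum]
        simp [TensorProduct.tmul_smul]⟩

end Aux

/-- the quotient `A` of the free algebra on the symbols
`x_{b,c}` by the ideal generated by the coefficients of the relations of `B`
carries a well-defined algebra morphism `h : B → C ⊗ A` with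
`h(b) = Σ_{c ∈ δ_b} c ⊗ [x_{b,c}]`, and `(A, h)` is the universal pair of
Lemma 5-121553. -/
theorem stmt_18 (G : Set B) (hG : Algebra.adjoin K G = ⊤)
    (hπ : Function.Surjective (present K G))
    (δ : G → Finset C) {ι : Type} (v : Module.Basis ι K C)
    (hsub : ∀ b : G, ((δ b : Set C)) ⊆ Set.range v) :
    ∃ h : B →ₐ[K] C ⊗[K] RingQuot (coeffRel K G δ v),
      -- h is the well-defined morphism induced by b ↦ Σ_c c ⊗ [x_{b,c}]:
      h.comp (present K G) =
        (Algebra.TensorProduct.map (AlgHom.id K C)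
          (RingQuot.mkAlgHom K (coeffRel K G δ v))).comp (symSubst K G δ) ∧
      -- and it is unique as such:
      (∀ h' : B →ₐ[K] C ⊗[K] RingQuot (coeffRel K G δ v),
        h'.comp (present K G) =
          (Algebra.TensorProduct.map (AlgHom.id K C)
            (RingQuot.mkAlgHom K (coeffRel K G δ v))).comp (symSubst K G δ) →
        h' = h) ∧
      -- (A, h) satisfies the span condition of Lemma 5-121553 ...
      (∀ b : G, h b ∈ Submodule.span K
        {x : C ⊗[K] RingQuot (coeffRel K G δ v) |
          ∃ c ∈ δ b, ∃ a : RingQuot (coeffRel K G δ v), x = c ⊗ₜ[K] a}) ∧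
      -- ... and its universal property:
      (∀ (A' : Type) [Ring A'] [Algebra K A'] (h' : B →ₐ[K] C ⊗[K] A'),
        (∀ b : G, h' b ∈ Submodule.span K
          {x : C ⊗[K] A' | ∃ c ∈ δ b, ∃ a : A', x = c ⊗ₜ[K] a}) →
        ∃! α : RingQuot (coeffRel K G δ v) →ₐ[K] A',
          h' = (Algebra.TensorProduct.map (AlgHom.id K C) α).comp h) := by
  classical
  let mk := RingQuot.mkAlgHom K (coeffRel K G δ v)
  let ψ := Algebra.TensorProduct.map (AlgHom.id K C) mk
  let φ : FreeAlgebra K G →ₐ[K] C ⊗[K] RingQuot (coeffRel K G δ v) :=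
    ψ.comp (symSubst K G δ)
  have hker : ∀ r, present K G r = 0 → φ r = 0 := by
    intro r hr
    apply coeffAt_eq_zero K v
    intro i
    have hnat := coeffAt_map K v _ _ mk i (symSubst K G δ r)
    have : φ r = Algebra.TensorProduct.map (AlgHom.id K C) mk (symSubst K G δ r) := rfl
    rw [this, hnat]
    have hrel : coeffRel K G δ v
        (coeffAt K v i (FreeAlgebra K (SymGen G δ)) (symSubst K G δ r)) 0 :=
      ⟨rfl, r, hr, i, rfl⟩
    calc mk _ = mk 0 := RingQuot.mkAlgHom_rel K hrel
      _ = 0 := map_zero _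
  let finv := Function.surjInv hπ
  have hfinv : Function.RightInverse finv (present K G) := Function.rightInverse_surjInv hπ
  let h₀ : B →+* C ⊗[K] RingQuot (coeffRel K G δ v) :=
    RingHom.liftOfRightInverse (present K G).toRingHom finv hfinv
      ⟨φ.toRingHom, fun r hr => RingHom.mem_ker.mpr (hker r (RingHom.mem_ker.mp hr))⟩
  have hcomp₀ : ∀ x, h₀ (present K G x) = φ x := fun x =>
    RingHom.liftOfRightInverse_comp_apply _ _ hfinv _ x
  let h : B →ₐ[K] C ⊗[K] RingQuot (coeffRel K G δ v) :=
    { h₀ with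
      commutes' := fun k => by
        have h1 : algebraMap K B k = present K G (algebraMap K (FreeAlgebra K G) k) :=
          ((present K G).commutes k).symm
        show h₀ (algebraMap K B k) = _
        rw [h1, hcomp₀, φ.commutes] }
  have hh : ∀ x, h (present K G x) = ψ (symSubst K G δ x) := hcomp₀
  refine ⟨h, AlgHom.ext hh, ?_, ?_, ?_⟩
  · intro h' hh'
    apply AlgHom.ext; intro b
    obtain ⟨x, rfl⟩ := hπ b
    have h2 := AlgHom.congr_fun hh' x
    simp only [AlgHom.comp_apply] at h2
    rw [h2]; exact (hh x).symm
  · intro b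
    have h1 : (b : B) = present K G (FreeAlgebra.ι K b) := by
      simp [present]
    rw [h1, hh]
    have h2 : ψ (symSubst K G δ (FreeAlgebra.ι K b)) =
        ∑ c ∈ (δ b).attach,
          (c : C) ⊗ₜ[K] mk (FreeAlgebra.ι K (⟨b, c⟩ : SymGen G δ)) := by
      simp [ψ, symSubst, FreeAlgebra.lift_ι_apply, map_sum,
        Algebra.TensorProduct.map_tmul]
    rw [h2]
    apply Submodule.sum_mem
    intro c _
    exact Submodule.subset_span ⟨c, c.2, _, rfl⟩
  · intro A' _ _ h' hspan
    choose idx hidx using fun (b : G) (c : {c : C // c ∈ δ b}) =>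
      hsub b (Finset.mem_coe.mpr c.2)
    let α₀ : FreeAlgebra K (SymGen G δ) →ₐ[K] A' :=
      FreeAlgebra.lift K (fun x : SymGen G δ => coeffAt K v (idx x.1 x.2) A' (h' x.1))
    have hα₀ : ∀ x : SymGen G δ,
        α₀ (FreeAlgebra.ι K x) = coeffAt K v (idx x.1 x.2) A' (h' x.1) := fun x =>
      FreeAlgebra.lift_ι_apply _ _
    have hg : (Algebra.TensorProduct.map (AlgHom.id K C) α₀).comp (symSubst K G δ)
        = h'.comp (present K G) := by
      apply FreeAlgebra.hom_ext
      funext b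
      show Algebra.TensorProduct.map (AlgHom.id K C) α₀
          (symSubst K G δ (FreeAlgebra.ι K b)) = h' (present K G (FreeAlgebra.ι K b))
      obtain ⟨m, hm⟩ := span_exists_repr K (δ b) A' (h' (b : B)) (hspan b)
      have key : ∀ c : {c : C // c ∈ δ b},
          coeffAt K v (idx b c) A' (h' (b : B)) = m c := by
        intro c; rw [hm]; exact coeffAt_sum_tmul K v (δ b) (idx b) (hidx b) A' m c
      have lhs : Algebra.TensorProduct.map (AlgHom.id K C) α₀
          (symSubst K G δ (FreeAlgebra.ι K b)) =
          ∑ c ∈ (δ b).attach, (c : C) ⊗ₜ[K] coeffAt K v (idx b c) A' (h' (b : B)) := by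
        simp [symSubst, FreeAlgebra.lift_ι_apply, map_sum,
          Algebra.TensorProduct.map_tmul, hα₀]
        exact Finset.sum_congr rfl fun c _ => congrArg (fun a => (c : C) ⊗ₜ[K] a) (hα₀ ⟨b, c⟩)
      have rhs : present K G (FreeAlgebra.ι K b) = (b : B) := by simp [present]
      rw [lhs, rhs]
      simp only [key]
      exact hm.symm
    have hrel : ∀ ⦃x y⦄, coeffRel K G δ v x y → α₀ x = α₀ y := by
      rintro x y ⟨rfl, r, hr, i, rfl⟩
      rw [map_zero, ← coeffAt_map K v _ _ α₀ i (symSubst K G δ r)]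
      have h2 := AlgHom.congr_fun hg r
      simp only [AlgHom.comp_apply] at h2
      rw [h2, hr, map_zero, map_zero]
    let α : RingQuot (coeffRel K G δ v) →ₐ[K] A' := RingQuot.liftAlgHom K ⟨α₀, hrel⟩
    have hα : ∀ x, α (mk x) = α₀ x := fun x =>
      RingQuot.liftAlgHom_mkAlgHom_apply K α₀ hrel x
    have hcm : α.comp mk = α₀ := AlgHom.ext hα
    have e4 : (Algebra.TensorProduct.map (AlgHom.id K C) α).comp ψ
        = Algebra.TensorProduct.map (AlgHom.id K C) α₀ := by
      show (Algebra.TensorProduct.map (AlgHom.id K C) α).comp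
          (Algebra.TensorProduct.map (AlgHom.id K C) mk) = _
      rw [← Algebra.TensorProduct.map_comp, hcm, AlgHom.comp_id]
    refine ⟨α, ?_, ?_⟩
    · apply AlgHom.ext; intro b
      obtain ⟨x, rfl⟩ := hπ b
      have e2 := AlgHom.congr_fun hg x
      simp only [AlgHom.comp_apply] at e2
      calc h' (present K G x)
          = Algebra.TensorProduct.map (AlgHom.id K C) α₀ (symSubst K G δ x) := e2.symm
        _ = Algebra.TensorProduct.map (AlgHom.id K C) α (ψ (symSubst K G δ x)) :=
            (AlgHom.congr_fun e4 _).symm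
        _ = ((Algebra.TensorProduct.map (AlgHom.id K C) α).comp h) (present K G x) := by
            rw [AlgHom.comp_apply, hh]
    · intro β hβ
      have hgen : ∀ x : SymGen G δ,
          β (mk (FreeAlgebra.ι K x)) = α (mk (FreeAlgebra.ι K x)) := by
        rintro ⟨b, c⟩
        have hb : h (b : B) = ∑ c' ∈ (δ b).attach,
            (c' : C) ⊗ₜ[K] mk (FreeAlgebra.ι K (⟨b, c'⟩ : SymGen G δ)) := by
          have h1 : (b : B) = present K G (FreeAlgebra.ι K b) := by simp [present]
          rw [h1, hh]
          simp [ψ, symSubst, FreeAlgebra.lift_ι_apply, map_sum,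
            Algebra.TensorProduct.map_tmul]
        have hβ' : h' (b : B) = ∑ c' ∈ (δ b).attach,
            (c' : C) ⊗ₜ[K] β (mk (FreeAlgebra.ι K (⟨b, c'⟩ : SymGen G δ))) := by
          rw [hβ, AlgHom.comp_apply, hb, map_sum]
          simp [Algebra.TensorProduct.map_tmul]
        have e5 : coeffAt K v (idx b c) A' (h' (b : B))
            = β (mk (FreeAlgebra.ι K (⟨b, c⟩ : SymGen G δ))) := by
          rw [hβ']
          exact coeffAt_sum_tmul K v (δ b) (idx b) (hidx b) A' _ c
        rw [hα]
        exact e5.symm.trans (hα₀ ⟨b, c⟩).symm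
      have hβα : β.comp mk = α.comp mk := by
        apply FreeAlgebra.hom_ext
        funext y
        exact hgen y
      apply AlgHom.ext; intro a
      obtain ⟨x, rfl⟩ := RingQuot.mkAlgHom_surjective K (coeffRel K G δ v) a
      exact AlgHom.congr_fun hβα x


end
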